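/- Every complex zero z of the polynomial P_m(z) = P_m^{(m+1/2, -m-1/2)}(z) satisfies |z + 1| < 1. -/

import Mathlib

/-!
Put `y = z + 1`. Writing `z - 1 = y - 2` and summing with Chu–Vandermonde expresses
`2^m P_m(z)` as `∑ j ≤ m, a_j y^j` with `a_j = C(2(m-j), m-j) / 2^(m-j) * C(m+j, j)`; the central
binomial coefficient enters through `(-4)^d C(-1/2, d) = C(2d, d)`. The `a_j` are positive and
strictly increasing, so by the Eneström–Kakeya theorem every zero has `|y| < 1`.
-/

open Finset

/-- Generalized binomial coefficient over ℂ: `binom(u, j) = u(u-1)⋯(u-j+1)/j!`. -/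
noncomputable def gbinomC (u : ℂ) (j : ℕ) : ℂ :=
  (∏ i ∈ Finset.range j, (u - i)) / (Nat.factorial j)

/-- Jacobi polynomial via the explicit sum formula, viewed over ℂ
(with real parameters α, β). -/
noncomputable def jacobiC (n : ℕ) (α β : ℝ) (z : ℂ) : ℂ :=
  ((2:ℂ)^n)⁻¹ * ∑ k ∈ Finset.range (n+1),
    gbinomC ((n:ℂ) + (α:ℂ)) (n - k) * gbinomC ((n:ℂ) + (β:ℂ)) k *
      (z - 1)^k * (z + 1)^(n - k)

namespace Ring

section BinomialRing

variable {R : Type*} [CommRing R] [BinomialRing R]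

theorem add_choose_eq_sum_range (r s : R) (n : ℕ) :
    choose (r + s) n = ∑ k ∈ range (n + 1), choose r k * choose s (n - k) := by
  rw [add_choose_eq n (Commute.all r s),
    Nat.sum_antidiagonal_eq_sum_range_succ (fun i j => choose r i * choose s j)]

theorem sum_Ico_choose_mul_choose_mul_choose (A B : R) {i n : ℕ} (hi : i ≤ n) :
    ∑ k ∈ Ico i (n + 1), choose A (n - k) * choose B k * (k.choose i : R) =
      choose B i * choose (A + B - i) (n - i) := by
  have hterm : ∀ k ∈ Ico i (n + 1), choose A (n - k) * choose B k * (k.choose i : R) =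
      choose B i * (choose (B - i) (k - i) * choose A (n - k)) := by
    intro k hk
    rw [mul_assoc, mul_comm (choose B k), ← nsmul_eq_mul, choose_smul_choose B (mem_Ico.1 hk).1]
    ring
  rw [sum_congr rfl hterm, ← mul_sum, show A + B - i = B - i + A by ring, add_choose_eq_sum_range,
    sum_Ico_eq_sum_range, show n + 1 - i = n - i + 1 by omega]
  refine congrArg _ (sum_congr rfl fun t _ => ?_)
  rw [show i + t - i = t by omega, show n - (i + t) = n - i - t by omega]

theorem sum_choose_mul_choose_mul_sub_one_pow_mul_add_one_pow (A B z : R) (n : ℕ) :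
    ∑ k ∈ range (n + 1), choose A (n - k) * choose B k * (z - 1) ^ k * (z + 1) ^ (n - k) =
      ∑ j ∈ range (n + 1),
        (-2) ^ (n - j) * choose B (n - j) * choose (A + B - (n - j : ℕ)) j * (z + 1) ^ j := by
  have hexpand : ∀ k ∈ range (n + 1), (z - 1) ^ k * (z + 1) ^ (n - k) =
      ∑ i ∈ range (k + 1), (-2) ^ i * (k.choose i : R) * (z + 1) ^ (n - i) := by
    intro k hk
    rw [show z - 1 = -2 + (z + 1) by ring, add_pow, sum_mul]
    refine sum_congr rfl fun i hi => ?_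
    rw [show n - i = k - i + (n - k) by have := mem_range.1 hk; have := mem_range.1 hi; omega,
      pow_add]
    ring
  calc _ = ∑ k ∈ range (n + 1), ∑ i ∈ range (k + 1),
        choose A (n - k) * choose B k * (k.choose i : R) * ((-2) ^ i * (z + 1) ^ (n - i)) := by
        refine sum_congr rfl fun k hk => ?_
        rw [mul_assoc, hexpand k hk, mul_sum]
        exact sum_congr rfl fun i _ => by ring
    _ = ∑ i ∈ range (n + 1), ∑ k ∈ Ico i (n + 1),
        choose A (n - k) * choose B k * (k.choose i : R) * ((-2) ^ i * (z + 1) ^ (n - i)) := by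
        simp only [range_eq_Ico]
        exact (sum_Ico_Ico_comm 0 (n + 1) _).symm
    _ = ∑ i ∈ range (n + 1),
        (-2) ^ i * choose B i * choose (A + B - i) (n - i) * (z + 1) ^ (n - i) := by
        refine sum_congr rfl fun i hi => ?_
        rw [← sum_mul,
          sum_Ico_choose_mul_choose_mul_choose A B (Nat.lt_succ_iff.1 (mem_range.1 hi))]
        ring
    _ = _ := by
        rw [← sum_range_reflect]
        refine sum_congr rfl fun j hj => ?_
        rw [show n + 1 - 1 - j = n - j by omega,
          Nat.sub_sub_self (Nat.lt_succ_iff.1 (mem_range.1 hj))]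

theorem choose_succ_mul (u : R) (d : ℕ) :
    (d + 1 : R) * choose u (d + 1) = choose u d * (u - d) := by
  have h := choose_smul_choose u (Nat.le_add_right d 1)
  rwa [Nat.choose_succ_self_right, Nat.add_sub_cancel_left, choose_one_right, nsmul_eq_mul,
    Nat.cast_succ] at h

end BinomialRing

section Field

variable {K : Type*} [Field K] [CharZero K]

theorem choose_eq_prod_range_div_factorial (u : K) (n : ℕ) :
    choose u n = (∏ j ∈ range n, (u - j)) / n.factorial := by
  rw [choose_eq_smul, ← Polynomial.aeval_eq_smeval, Polynomial.aeval_def, ← Polynomial.eval_map,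
    descPochhammer_map, descPochhammer_eval_eq_prod_range, smul_eq_mul, inv_mul_eq_div]

theorem neg_four_pow_mul_choose_neg_half (d : ℕ) :
    (-4 : K) ^ d * choose (-2⁻¹ : K) d = d.centralBinom := by
  induction d with
  | zero => simp
  | succ d ih =>
    have hrec : (d + 1 : K) * (d + 1).centralBinom = 2 * (2 * d + 1) * d.centralBinom := by
      exact_mod_cast Nat.succ_mul_centralBinom_succ d
    refine mul_left_cancel₀ (Nat.cast_add_one_ne_zero d) ?_
    rw [hrec, ← ih, mul_left_comm, choose_succ_mul, pow_succ]
    field_simp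
    ring

end Field

end Ring

namespace Complex

theorem eq_one_of_norm_le_one_of_re_eq_one {v : ℂ} (hv : ‖v‖ ≤ 1) (hre : v.re = 1) : v = 1 := by
  have hnorm : ‖v‖ = 1 := le_antisymm hv (hre ▸ re_le_norm v)
  exact ext hre (abs_re_eq_norm.1 (by rw [hre, hnorm, abs_one]))

theorem eq_one_of_sum_mul_eq_sum {ι : Type*} {s : Finset ι} {w : ι → ℝ} {v : ι → ℂ}
    (hw : ∀ i ∈ s, 0 ≤ w i) (hv : ∀ i ∈ s, ‖v i‖ ≤ 1)
    (h : ∑ i ∈ s, (w i : ℂ) * v i = ∑ i ∈ s, (w i : ℂ)) {i : ι} (hi : i ∈ s) (hwi : 0 < w i) :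
    v i = 1 := by
  have hdefect : ∑ i ∈ s, w i * (1 - (v i).re) = 0 := by
    have := congrArg re h
    simp only [re_sum, re_ofReal_mul, ofReal_re] at this
    simp only [mul_sub, mul_one, sum_sub_distrib, this, sub_self]
  have hnonneg : ∀ i ∈ s, 0 ≤ w i * (1 - (v i).re) := fun i hi =>
    mul_nonneg (hw i hi) (sub_nonneg.2 ((re_le_norm _).trans (hv i hi)))
  have hi0 := (sum_eq_zero_iff_of_nonneg hnonneg).1 hdefect i hi
  refine eq_one_of_norm_le_one_of_re_eq_one (hv i hi) ?_
  nlinarith [mul_eq_zero.1 hi0]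

end Complex

theorem one_sub_mul_sum_mul_pow_add {R : Type*} [CommRing R] (a : ℕ → R) (y : R) (m : ℕ) :
    (1 - y) * ∑ j ∈ range (m + 1), a j * y ^ j + a m * y ^ (m + 1) =
      ∑ j ∈ range m, (a (j + 1) - a j) * y ^ (j + 1) + a 0 := by
  induction m with
  | zero => simp only [zero_add, sum_range_one, sum_range_zero, pow_zero, pow_one, mul_one]; ring
  | succ m ih =>
    rw [sum_range_succ (fun j => a j * y ^ j) (m + 1),
      sum_range_succ (fun j => (a (j + 1) - a j) * y ^ (j + 1)) m]
    linear_combination ih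

theorem eq_one_of_sum_mul_pow_eq_zero_of_one_le_norm {m : ℕ} {a : ℕ → ℝ} (h0 : 0 < a 0)
    (ha : ∀ j < m, a j < a (j + 1)) {y : ℂ} (hy : ∑ j ∈ range (m + 1), (a j : ℂ) * y ^ j = 0)
    (hy1 : 1 ≤ ‖y‖) : y = 1 := by
  have hy0 : y ≠ 0 := by rintro rfl; norm_num at hy1
  -- `(1 - y) p(y) = ∑ w_j y^j - a_m y^(m+1)` with weights `w_j ≥ 0` summing to `a_m`; divided by
  -- `y^(m+1)`, this writes `a_m` as a weighted sum of points of the closed unit disk.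
  let w : ℕ → ℝ := fun | 0 => a 0 | j + 1 => a (j + 1) - a j
  have hw : ∀ j ∈ range (m + 1), 0 ≤ w j := by
    rintro (_ | j) hj
    · exact h0.le
    · exact sub_nonneg.2 (ha j (by rw [mem_range] at hj; omega)).le
  have hw_sum : ∑ j ∈ range (m + 1), (w j : ℂ) = a m := by
    rw [sum_range_succ']
    push_cast [w]
    rw [sum_range_sub (fun j => (a j : ℂ))]
    ring
  have hw_pow : ∑ j ∈ range (m + 1), (w j : ℂ) * y ^ j = a m * y ^ (m + 1) := by
    rw [sum_range_succ']
    push_cast [w]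
    linear_combination (1 - y) * hy - one_sub_mul_sum_mul_pow_add (fun j => (a j : ℂ)) y m
  have hv : ∀ j ∈ range (m + 1), ‖y ^ j / y ^ (m + 1)‖ ≤ 1 := fun j hj => by
    rw [norm_div, norm_pow, norm_pow, div_le_one (by positivity)]
    exact pow_le_pow_right₀ hy1 (by rw [mem_range] at hj; omega)
  have hwv : ∑ j ∈ range (m + 1), (w j : ℂ) * (y ^ j / y ^ (m + 1)) =
      ∑ j ∈ range (m + 1), (w j : ℂ) := by
    simp only [mul_div_assoc']
    rw [← sum_div, hw_pow, hw_sum, mul_div_cancel_right₀ _ (pow_ne_zero _ hy0)]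
  cases m with
  | zero => simp [h0.ne'] at hy
  | succ k =>
    have hv1 := Complex.eq_one_of_sum_mul_eq_sum hw hv hwv (self_mem_range_succ (k + 1))
      (sub_pos.2 (ha k (lt_add_one k)))
    rw [div_eq_one_iff_eq (pow_ne_zero _ hy0), pow_succ y (k + 1)] at hv1
    exact (mul_right_eq_self₀.1 hv1.symm).resolve_right (pow_ne_zero _ hy0)

/-- The Eneström–Kakeya theorem, for strictly increasing coefficients. -/
theorem norm_lt_one_of_sum_mul_pow_eq_zero {m : ℕ} {a : ℕ → ℝ} (h0 : 0 < a 0)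
    (ha : ∀ j < m, a j < a (j + 1)) {y : ℂ} (hy : ∑ j ∈ range (m + 1), (a j : ℂ) * y ^ j = 0) :
    ‖y‖ < 1 := by
  by_contra! hy1
  obtain rfl := eq_one_of_sum_mul_pow_eq_zero_of_one_le_norm h0 ha hy hy1
  have hpos : ∀ j ≤ m, 0 < a j := by
    intro j hj
    induction j with
    | zero => exact h0
    | succ j ih => exact (ih (by omega)).trans (ha j (by omega))
  have hsum_pos : 0 < ∑ j ∈ range (m + 1), a j :=
    sum_pos (fun j hj => hpos j (Nat.lt_succ_iff.1 (mem_range.1 hj))) nonempty_range_add_one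
  simp only [one_pow, mul_one] at hy
  exact hsum_pos.ne' (by exact_mod_cast hy)

/-- `2^m P_m(z) = ∑ j ≤ m, jacobiCoeff m j * (z + 1)^j`. -/
noncomputable def jacobiCoeff (m j : ℕ) : ℝ :=
  (m - j).centralBinom / 2 ^ (m - j) * (m + j).choose j

theorem jacobiCoeff_zero_pos (m : ℕ) : 0 < jacobiCoeff m 0 := by
  have := m.centralBinom_pos
  rw [jacobiCoeff, Nat.choose_zero_right]
  positivity

theorem jacobiCoeff_lt_succ {m j : ℕ} (h : j < m) : jacobiCoeff m j < jacobiCoeff m (j + 1) := by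
  obtain ⟨d, rfl⟩ : ∃ d, m = j + d + 1 := ⟨m - j - 1, by omega⟩
  unfold jacobiCoeff
  rw [show j + d + 1 - j = d + 1 by omega, show j + d + 1 - (j + 1) = d by omega,
    show j + d + 1 + j = 2 * j + d + 1 by ring, show j + d + 1 + (j + 1) = 2 * j + d + 2 by ring]
  have hc : ((d + 1).centralBinom : ℝ) = 2 * (2 * d + 1) * d.centralBinom / (d + 1) := by
    rw [eq_div_iff (by positivity), mul_comm]
    exact_mod_cast d.succ_mul_centralBinom_succ
  have hb : ((2 * j + d + 2).choose (j + 1) : ℝ) =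
      (2 * j + d + 2) * (2 * j + d + 1).choose j / (j + 1) := by
    rw [eq_div_iff (by positivity)]
    exact_mod_cast ((2 * j + d + 1).add_one_mul_choose_eq j).symm
  set X : ℝ := d.centralBinom * (2 * j + d + 1).choose j / 2 ^ d with hX_def
  have hX : 0 < X := by
    have := d.centralBinom_pos
    have := Nat.choose_pos (show j ≤ 2 * j + d + 1 by omega)
    positivity
  rw [hc, hb]
  calc _ = (2 * d + 1) / (d + 1) * X := by rw [hX_def, pow_succ]; field_simp
    _ < (2 * j + d + 2) / (j + 1) * X := by
        refine mul_lt_mul_of_pos_right ?_ hX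
        rw [div_lt_div_iff₀ (by positivity) (by positivity)]
        nlinarith
    _ = _ := by rw [hX_def]; field_simp

theorem jacobiCoeff_eq (m j : ℕ) :
    (jacobiCoeff m j : ℂ) =
      (-2) ^ (m - j) * Ring.choose (-2⁻¹ : ℂ) (m - j) * Ring.choose ((m + j : ℕ) : ℂ) j := by
  rw [jacobiCoeff, Ring.choose_natCast]
  push_cast
  rw [← Ring.neg_four_pow_mul_choose_neg_half, show (-4 : ℂ) = -2 * 2 by norm_num, mul_pow]
  field_simp

theorem gbinomC_eq_choose (u : ℂ) (j : ℕ) : gbinomC u j = Ring.choose u j :=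
  (Ring.choose_eq_prod_range_div_factorial u j).symm

/-- Every complex zero of `P_m^{(m+1/2,-m-1/2)}` satisfies `|z+1| < 1`. -/
theorem zeros_in_disk (m : ℕ) (z : ℂ)
    (hz : jacobiC m ((m:ℝ) + 1/2) (-(m:ℝ) - 1/2) z = 0) :
    ‖z + 1‖ < 1 := by
  have hα : (m : ℂ) + (((m : ℝ) + 1 / 2 : ℝ) : ℂ) = 2 * m + 2⁻¹ := by push_cast; ring
  have hβ : (m : ℂ) + ((-(m : ℝ) - 1 / 2 : ℝ) : ℂ) = -2⁻¹ := by push_cast; ring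
  rw [jacobiC, mul_eq_zero, or_iff_right (by simp)] at hz
  simp only [gbinomC_eq_choose, hα, hβ,
    Ring.sum_choose_mul_choose_mul_sub_one_pow_mul_add_one_pow] at hz
  refine norm_lt_one_of_sum_mul_pow_eq_zero (jacobiCoeff_zero_pos m)
    (fun j hj => jacobiCoeff_lt_succ hj) (hz ▸ sum_congr rfl fun j hjm => ?_)
  have hj : j ≤ m := Nat.lt_succ_iff.1 (mem_range.1 hjm)
  rw [jacobiCoeff_eq, show (2 * m + 2⁻¹ : ℂ) + -2⁻¹ - (m - j : ℕ) = (m + j : ℕ) by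
    push_cast [Nat.cast_sub hj]; ring]
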